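/- The group Homeo(I, ∂I) is not bi-orderable. -/

import Mathlib

/-!
In a bi-ordered group `x < y` forces `x * x < x * y < y * y`, so square roots are unique and
anything commuting with `b * b` commutes with `b`. Bi-orderability passes to subgroups, and every
order automorphism of `ℝ ≃o (-1, 1)` extends, by fixing `±1`, to an element of `Homeo(I, ∂I)`.
But `x ↦ x + sin (π x) / 4` is an order automorphism of `ℝ` that commutes with translation by `2`
and not with translation by `1`.
-/

open Set

namespace Stmt

lemma negOne_mem_I : (-1 : ℝ) ∈ Set.Icc (-1 : ℝ) 1 := by norm_num
lemma one_mem_I : (1 : ℝ) ∈ Set.Icc (-1 : ℝ) 1 := by norm_num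

/-- The group of homeomorphisms of `I = [-1,1]` fixing the endpoints `-1` and `1`,
realized as a subgroup of the group of bijections of `I`. -/
def HomeoI : Subgroup (Equiv.Perm (Set.Icc (-1 : ℝ) 1)) where
  carrier := {f | Continuous f ∧ Continuous f.symm ∧
    f ⟨-1, negOne_mem_I⟩ = ⟨-1, negOne_mem_I⟩ ∧ f ⟨1, one_mem_I⟩ = ⟨1, one_mem_I⟩}
  one_mem' := ⟨continuous_id, continuous_id, rfl, rfl⟩
  mul_mem' := by
    rintro a b ⟨ha1, ha2, ha3, ha4⟩ ⟨hb1, hb2, hb3, hb4⟩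
    refine ⟨ha1.comp hb1, ?_, ?_, ?_⟩
    · first | exact hb2.comp ha2 | simpa [mul_inv_rev] using hb2.comp ha2
    · simp [Equiv.Perm.mul_apply, hb3, ha3]
    · simp [Equiv.Perm.mul_apply, hb4, ha4]
  inv_mem' := by
    rintro a ⟨ha1, ha2, ha3, ha4⟩
    refine ⟨ha2, by first | exact ha1 | simpa using ha1, ?_, ?_⟩
    · show a.symm _ = _
      rw [Equiv.symm_apply_eq, ha3]
    · show a.symm _ = _
      rw [Equiv.symm_apply_eq, ha4]

end Stmt

/-- A group `G` is bi-orderable if there is a strict total order `<` on `G` such that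
`g < h` implies both `f*g < f*h` and `g*f < h*f` for all `f, g, h`. -/
def BiOrderable (G : Type*) [Group G] : Prop :=
  ∃ r : G → G → Prop, IsStrictTotalOrder G r ∧
    ∀ f g h : G, r g h → r (f * g) (f * h) ∧ r (g * f) (h * f)

namespace BiOrderable

variable {G H : Type*} [Group G] [Group H]

theorem of_injective (hH : BiOrderable H) (φ : G →* H) (hφ : Function.Injective φ) :
    BiOrderable G := by
  obtain ⟨r, hr, hmul⟩ := hH
  refine ⟨φ ⁻¹'o r, (RelEmbedding.preimage ⟨φ, hφ⟩ r).isStrictTotalOrder, fun f g h hgh => ?_⟩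
  simpa only [Order.Preimage, map_mul] using hmul (φ f) (φ g) (φ h) hgh

theorem eq_of_mul_self_eq_mul_self (hG : BiOrderable G) {a b : G} (h : a * a = b * b) :
    a = b := by
  obtain ⟨r, hr, hmul⟩ := hG
  have square_lt {x y : G} (hxy : r x y) : r (x * x) (y * y) :=
    _root_.trans (hmul x x y hxy).1 (hmul y x y hxy).2
  rcases trichotomous_of r a b with hab | hab | hab
  · exact absurd (h ▸ square_lt hab) (irrefl _)
  · exact hab
  · exact absurd (h ▸ square_lt hab) (irrefl _)

theorem commute_of_commute_mul_self (hG : BiOrderable G) {a b : G} (h : Commute a (b * b)) :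
    Commute a b := by
  have hconj : a * b * a⁻¹ = b := hG.eq_of_mul_self_eq_mul_self <|
    calc a * b * a⁻¹ * (a * b * a⁻¹) = a * (b * b) * a⁻¹ := by group
      _ = b * b := by rw [h.eq]; group
  exact mul_inv_eq_iff_eq_mul.mp hconj

end BiOrderable

section Wiggle

open Real Filter

noncomputable def wiggle (x : ℝ) : ℝ := x + sin (π * x) / 4

theorem wiggle_strictMono : StrictMono wiggle := by
  intro x y hxy
  have hsin := neg_abs_le (sin (π * y) - sin (π * x))
  have hlip : |sin (π * y) - sin (π * x)| ≤ π * (y - x) := by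
    simpa [← mul_sub, abs_mul, abs_of_pos pi_pos, abs_of_pos (sub_pos.2 hxy)]
      using abs_sin_sub_sin_le (π * y) (π * x)
  have : π * (y - x) < 4 * (y - x) := mul_lt_mul_of_pos_right pi_lt_four (sub_pos.2 hxy)
  unfold wiggle
  linarith

theorem wiggle_surjective : Function.Surjective wiggle := by
  have hcont : Continuous wiggle := by unfold wiggle; fun_prop
  refine hcont.surjective
    (tendsto_atTop_mono (fun x => ?_) (tendsto_atTop_add_const_right _ (-1 / 4) tendsto_id))
    (tendsto_atBot_mono (fun x => ?_) (tendsto_atBot_add_const_right _ (1 / 4) tendsto_id))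
  · have := neg_one_le_sin (π * x); simp only [wiggle, id]; linarith
  · have := sin_le_one (π * x); simp only [wiggle, id]; linarith

theorem wiggle_add_two (x : ℝ) : wiggle (x + 2) = wiggle x + 2 := by
  simp only [wiggle, mul_add, mul_comm π 2, sin_add_two_pi]
  ring

noncomputable def wiggleIso : ℝ ≃o ℝ :=
  wiggle_strictMono.orderIsoOfSurjective wiggle wiggle_surjective

theorem commute_wiggleIso_addRight_mul_self :
    Commute wiggleIso (OrderIso.addRight 1 * OrderIso.addRight 1) := by
  ext x
  show wiggle (x + 1 + 1) = wiggle x + 1 + 1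
  rw [add_assoc, one_add_one_eq_two, wiggle_add_two, add_assoc, one_add_one_eq_two]

theorem not_commute_wiggleIso_addRight : ¬ Commute wiggleIso (OrderIso.addRight 1) := by
  intro h
  have h_half : wiggle (1 / 2 + 1) = wiggle (1 / 2) + 1 := congrArg (· (1 / 2 : ℝ)) h
  have hsin : sin (π * (1 / 2 + 1)) = - sin (π * (1 / 2)) := by
    rw [mul_add, mul_one, sin_add_pi]
  rw [wiggle, wiggle, hsin, mul_one_div, sin_pi_div_two] at h_half
  norm_num at h_half

theorem not_biOrderable_orderIso_real : ¬ BiOrderable (ℝ ≃o ℝ) := fun h =>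
  not_commute_wiggleIso_addRight (h.commute_of_commute_mul_self commute_wiggleIso_addRight_mul_self)

end Wiggle

section ExtendIcc

open Equiv

variable {α β : Type*} [Preorder α] [LinearOrder β] {a b : β}

def iooEquivSubtypeIcc (a b : β) : Ioo a b ≃ {x : Icc a b // (x : β) ∈ Ioo a b} :=
  (subtypeSubtypeEquivSubtype fun hx => Ioo_subset_Icc_self hx).symm

noncomputable def extendIccHom (e : α ≃o Ioo a b) : (α ≃o α) →* Perm (Icc a b) where
  toFun w := Perm.extendDomain w.toEquiv (e.toEquiv.trans (iooEquivSubtypeIcc a b))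
  map_one' := Perm.extendDomain_one _
  map_mul' _ _ := (Perm.extendDomain_mul _ _ _).symm

theorem extendIccHom_apply (e : α ≃o Ioo a b) (w : α ≃o α) :
    extendIccHom e w = Perm.extendDomain w.toEquiv (e.toEquiv.trans (iooEquivSubtypeIcc a b)) :=
  rfl

theorem extendIccHom_injective (e : α ≃o Ioo a b) : Function.Injective (extendIccHom e) :=
  fun _ _ h => RelIso.toEquiv_injective (Perm.extendDomainHom_injective _ h)

theorem coe_extendIccHom_apply_of_mem (e : α ≃o Ioo a b) (w : α ≃o α) {x : Icc a b}
    (hx : (x : β) ∈ Ioo a b) : (extendIccHom e w x : β) = e (w (e.symm ⟨x, hx⟩)) := by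
  rw [extendIccHom_apply, Perm.extendDomain_apply_subtype _ _ (b := x) hx]
  rfl

theorem extendIccHom_apply_of_notMem (e : α ≃o Ioo a b) (w : α ≃o α) {x : Icc a b}
    (hx : (x : β) ∉ Ioo a b) : extendIccHom e w x = x := by
  rw [extendIccHom_apply]
  exact Perm.extendDomain_apply_not_subtype _ _ hx

theorem extendIccHom_monotone (e : α ≃o Ioo a b) (w : α ≃o α) :
    Monotone (extendIccHom e w) := by
  intro x y hxy
  rw [← Subtype.coe_le_coe]
  by_cases hx : (x : β) ∈ Ioo a b <;> by_cases hy : (y : β) ∈ Ioo a b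
  · rw [coe_extendIccHom_apply_of_mem e w hx, coe_extendIccHom_apply_of_mem e w hy]
    exact Subtype.coe_le_coe.2 (e.monotone (w.monotone (e.symm.monotone hxy)))
  · rw [coe_extendIccHom_apply_of_mem e w hx, extendIccHom_apply_of_notMem e w hy]
    have hby : b ≤ y := not_lt.1 fun h => hy ⟨hx.1.trans_le hxy, h⟩
    exact ((e _).2.2.trans_le hby).le
  · rw [extendIccHom_apply_of_notMem e w hx, coe_extendIccHom_apply_of_mem e w hy]
    have hxa : (x : β) ≤ a := not_lt.1 fun h => hx ⟨h, (Subtype.coe_le_coe.2 hxy).trans_lt hy.2⟩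
    exact (hxa.trans_lt (e _).2.1).le
  · rw [extendIccHom_apply_of_notMem e w hx, extendIccHom_apply_of_notMem e w hy]
    exact hxy

end ExtendIcc

theorem mem_homeoI_of_monotone {F : Equiv.Perm (Icc (-1 : ℝ) 1)} (hF : Monotone F)
    (hF_symm : Monotone F.symm) : F ∈ Stmt.HomeoI := by
  have : Fact ((-1 : ℝ) ≤ 1) := ⟨by norm_num⟩
  let G := F.toOrderIso hF hF_symm
  exact ⟨G.continuous, G.symm.continuous, G.map_bot, G.map_top⟩

noncomputable def orderIsoRealToHomeoI : (ℝ ≃o ℝ) →* Stmt.HomeoI :=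
  (extendIccHom (orderIsoIooNegOneOne ℝ)).codRestrict Stmt.HomeoI fun w =>
    mem_homeoI_of_monotone (extendIccHom_monotone _ w)
      (by simpa only [← Equiv.Perm.inv_def, ← map_inv] using extendIccHom_monotone _ w⁻¹)

/-- The group `Homeo(I, ∂I)` of homeomorphisms of `[-1,1]` fixing the endpoints is
not bi-orderable. -/
theorem homeoI_not_biOrderable : ¬ BiOrderable Stmt.HomeoI := fun h =>
  not_biOrderable_orderIso_real <| h.of_injective orderIsoRealToHomeoI fun _ _ hw =>
    extendIccHom_injective _ (congrArg Subtype.val hw)
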